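/- arXiv:1808.01589 — 2 statements merged into one kernel-verified Lean document; each statement's English description precedes it below -/
import Mathlib

section
/- For any (k-1,ℓ-1)-tensor w on ℝ², any v ∈ ℝ², and any u ∈ ℝ² with ⟨u, v⟩ = 0, the tensor λw obtained by symmetrized multiplication with the Euclidean metric satisfies Σ (λw)(I,J) v^{I} u^{J} = 0; in particular Im(λ) is contained in the kernel of the contraction map f ↦ ((v) ↦ Σ f(I,J) v^{I} σ(v)^{J}). -/
open scoped BigOperators
open MeasureTheory

namespace MRT

/-- A multi-index with `n` slots, each ranging over the two coordinate indices of `ℝ²`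
(`0` stands for the index "1", `1` stands for the index "2"). -/
abbrev Idx (n : ℕ) := Fin n → Fin 2

/-- A `(k,ℓ)`-tensor over `ℝ²`: a function of `k` first-group and `ℓ` second-group indices. -/
abbrev Tens (k l : ℕ) := Idx k → Idx l → ℝ

/-- A tensor with `n` (fully interchangeable) slots. -/
abbrev Full (n : ℕ) := Idx n → ℝ

/-- The index swap `δ` exchanging the two coordinate indices. -/
def dswap : Fin 2 → Fin 2 := fun i => 1 - i

/-- `N J` : the number of entries of `J` equal to the first index ("1"). -/
def NJ {n : ℕ} (J : Idx n) : ℕ := (Finset.univ.filter fun j => J j = 0).card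

/-- The operator `A`: `(Af)(I,J) = (-1)^(ℓ - N(J)) f(I, δ(J))`. -/
def opA {k l : ℕ} (f : Tens k l) : Tens k l :=
  fun I J => (-1 : ℝ) ^ (l - NJ J) * f I (dswap ∘ J)

/-- Full symmetrization (average over all permutations of the `n` slots). -/
noncomputable def Sym {n : ℕ} (h : Full n) : Full n :=
  fun I => ((Nat.factorial n : ℝ))⁻¹ * ∑ σ : Equiv.Perm (Fin n), h (I ∘ σ)

/-- Symmetrization over the first index group only. -/
noncomputable def symK {k l : ℕ} (f : Tens k l) : Tens k l :=
  fun I J => ((Nat.factorial k : ℝ))⁻¹ * ∑ σ : Equiv.Perm (Fin k), f (I ∘ σ) J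

/-- Symmetrization over the second index group only. -/
noncomputable def symL {k l : ℕ} (f : Tens k l) : Tens k l :=
  fun I J => ((Nat.factorial l : ℝ))⁻¹ * ∑ σ : Equiv.Perm (Fin l), f I (J ∘ σ)

/-- View a `(k,ℓ)`-tensor as a `(k+ℓ)`-tensor. -/
def toFull {k l : ℕ} (f : Tens k l) : Full (k + l) :=
  fun I => f (fun i => I (Fin.castAdd l i)) (fun j => I (Fin.natAdd k j))

/-- View a `(k+ℓ)`-tensor as a `(k,ℓ)`-tensor. -/
def fromFull {k l : ℕ} (h : Full (k + l)) : Tens k l :=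
  fun I J => h (Fin.append I J)

/-- The operator `λ` : symmetrized multiplication with the Euclidean metric `g = δ`. -/
noncomputable def lam {k l : ℕ} (w : Tens k l) : Tens (k + 1) (l + 1) :=
  symK (symL (fun I J =>
    (if I 0 = J 0 then (1 : ℝ) else 0) * w (Fin.tail I) (Fin.tail J)))

/-- The contraction `v^I = v_{i₁} ⋯ v_{i_n}`. -/
def vpow {n : ℕ} (v : Fin 2 → ℝ) (I : Idx n) : ℝ := ∏ i, v (I i)

/-- The rotation `σ(v) = (v₂, -v₁)`. -/
def rot (v : Fin 2 → ℝ) : Fin 2 → ℝ := ![v 1, -v 0]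

/-- Euclidean dot product on `ℝ²`. -/
def dot (x v : Fin 2 → ℝ) : ℝ := x 0 * v 0 + x 1 * v 1

/-- Symmetry in the first `k` and in the last `ℓ` index slots. -/
def SymmIn {k l : ℕ} (f : Tens k l) : Prop :=
  ∀ (I : Idx k) (J : Idx l) (σ : Equiv.Perm (Fin k)) (τ : Equiv.Perm (Fin l)),
    f (I ∘ σ) (J ∘ τ) = f I J

/-- Smoothness of a tensor field on `ℝ²`, componentwise. -/
def SmoothT {k l : ℕ} (u : (Fin 2 → ℝ) → Tens k l) : Prop :=
  ∀ I J, ContDiff ℝ (⊤ : ℕ∞) fun x => u x I J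

/-- The operator `d'` for the flat connection: symmetrized partial derivative placed in the
first index group. -/
noncomputable def dprime {k l : ℕ} (u : (Fin 2 → ℝ) → Tens k l) :
    (Fin 2 → ℝ) → Tens (k + 1) l :=
  fun x => symK fun I J =>
    fderiv ℝ (fun y => u y (Fin.tail I) J) x (Pi.single (I 0) 1)

/-- The full (flat) covariant derivative of a field of `n`-tensors, derivative slot first. -/
noncomputable def dfull {n : ℕ} (h : (Fin 2 → ℝ) → Full n) :
    (Fin 2 → ℝ) → Full (n + 1) :=
  fun x I => fderiv ℝ (fun y => h y (Fin.tail I)) x (Pi.single (I 0) 1)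

/-- The inner derivative `dˢ`: full symmetrization of the derivative, viewed as a
`(k+1,ℓ)`-tensor field. -/
noncomputable def dsym {k l : ℕ} (u : (Fin 2 → ℝ) → Tens k l) :
    (Fin 2 → ℝ) → Tens (k + 1) l :=
  fun x I J =>
    Sym (dfull (fun y => toFull (u y)) x) (Fin.cons (I 0) (Fin.append (Fin.tail I) J))

/-- The symmetric tensor `(⊗^m dx¹) ⊗_s (⊗^(n-m) dx²)` (averaged symmetrization of the
elementary tensor product with `m` copies of `dx¹` followed by copies of `dx²`). -/
noncomputable def E (n m : ℕ) : Full n :=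
  Sym fun I => if ∀ i : Fin n, (I i = 0 ↔ (i : ℕ) < m) then 1 else 0

/-- Membership in the closed unit disc. -/
def inDisc (x : Fin 2 → ℝ) : Prop := x 0 ^ 2 + x 1 ^ 2 ≤ 1

/-- Membership in the unit circle (the boundary of the disc). -/
def onSphere (x : Fin 2 → ℝ) : Prop := x 0 ^ 2 + x 1 ^ 2 = 1

/-- Unit vectors of `ℝ²`. -/
def unitVec (v : Fin 2 → ℝ) : Prop := v 0 ^ 2 + v 1 ^ 2 = 1

/-- Exit time of the chord `t ↦ x + t v` of the unit disc, `x ∈ ∂D`, `‖v‖ = 1`. -/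
noncomputable def tauD (x v : Fin 2 → ℝ) : ℝ := -2 * dot x v

/-- The mixed ray transform `L_{k,ℓ}` on the Euclidean unit disc. -/
noncomputable def Lray {k l : ℕ} (f : (Fin 2 → ℝ) → Tens k l) (x v : Fin 2 → ℝ) : ℝ :=
  ∫ t in (0:ℝ)..tauD x v,
    ∑ I : Idx k, ∑ J : Idx l, f (x + t • v) I J * vpow v I * vpow (rot v) J

/-- The geodesic (X-ray) transform of a field of symmetric `n`-tensors on the unit disc. -/
noncomputable def Iray {n : ℕ} (h : (Fin 2 → ℝ) → Full n) (x v : Fin 2 → ℝ) : ℝ :=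
  ∫ t in (0:ℝ)..tauD x v, ∑ I : Idx n, h (x + t • v) I * vpow v I


lemma vpow_comp {n : ℕ} (v : Fin 2 → ℝ) (I : Idx n) (σ : Equiv.Perm (Fin n)) :
    vpow v (I ∘ σ) = vpow v I := Equiv.prod_comp σ fun i => v (I i)

lemma sum_comp_perm {n : ℕ} (g : Idx n → ℝ) (σ : Equiv.Perm (Fin n)) :
    ∑ I : Idx n, g (I ∘ σ) = ∑ I : Idx n, g I :=
  Equiv.sum_comp (Equiv.arrowCongr σ.symm (Equiv.refl (Fin 2))) g

lemma contract_symK {k l : ℕ} (f : Tens k l) (v : Fin 2 → ℝ) (J : Idx l) :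
    ∑ I : Idx k, symK f I J * vpow v I = ∑ I : Idx k, f I J * vpow v I := by
  have step : ∀ I : Idx k,
      symK f I J * vpow v I
        = ((Nat.factorial k : ℝ))⁻¹ * ∑ σ : Equiv.Perm (Fin k), f (I ∘ σ) J * vpow v I := by
    intro I
    simp only [symK]
    rw [mul_assoc, Finset.sum_mul]
  have hperm : ∀ σ : Equiv.Perm (Fin k),
      ∑ I : Idx k, f (I ∘ σ) J * vpow v I = ∑ I : Idx k, f I J * vpow v I := by
    intro σ
    calc ∑ I : Idx k, f (I ∘ σ) J * vpow v I
        = ∑ I : Idx k, f (I ∘ σ) J * vpow v (I ∘ σ) := by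
          refine Finset.sum_congr rfl fun I _ => ?_
          rw [vpow_comp]
      _ = ∑ I : Idx k, f I J * vpow v I := sum_comp_perm (fun I => f I J * vpow v I) σ
  calc ∑ I : Idx k, symK f I J * vpow v I
      = ((Nat.factorial k : ℝ))⁻¹ * ∑ σ : Equiv.Perm (Fin k), ∑ I : Idx k,
          f (I ∘ σ) J * vpow v I := by
        simp only [step, ← Finset.mul_sum]
        rw [Finset.sum_comm]
    _ = ((Nat.factorial k : ℝ))⁻¹ * ∑ σ : Equiv.Perm (Fin k), ∑ I : Idx k,
          f I J * vpow v I := by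
        rw [Finset.sum_congr rfl fun σ _ => hperm σ]
    _ = ∑ I : Idx k, f I J * vpow v I := by
        rw [Finset.sum_const, Finset.card_univ, Fintype.card_perm, Fintype.card_fin,
          nsmul_eq_mul, ← mul_assoc, inv_mul_cancel₀ (by positivity), one_mul]

lemma contract_symL {k l : ℕ} (f : Tens k l) (u : Fin 2 → ℝ) (I : Idx k) :
    ∑ J : Idx l, symL f I J * vpow u J = ∑ J : Idx l, f I J * vpow u J := by
  have : ∑ J : Idx l, symK (fun J I => f I J) J I * vpow u J
      = ∑ J : Idx l, (fun J I => f I J) J I * vpow u J := contract_symK _ u I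
  simpa [symK, symL] using this

lemma contract_symKL {k l : ℕ} (f : Tens k l) (v u : Fin 2 → ℝ) :
    ∑ I : Idx k, ∑ J : Idx l, symK (symL f) I J * vpow v I * vpow u J
      = ∑ I : Idx k, ∑ J : Idx l, f I J * vpow v I * vpow u J := by
  calc ∑ I : Idx k, ∑ J : Idx l, symK (symL f) I J * vpow v I * vpow u J
      = ∑ J : Idx l, (∑ I : Idx k, symK (symL f) I J * vpow v I) * vpow u J := by
        rw [Finset.sum_comm]
        exact Finset.sum_congr rfl fun J _ => (Finset.sum_mul ..).symm
    _ = ∑ J : Idx l, (∑ I : Idx k, symL f I J * vpow v I) * vpow u J := by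
        exact Finset.sum_congr rfl fun J _ => by rw [contract_symK]
    _ = ∑ I : Idx k, (∑ J : Idx l, symL f I J * vpow u J) * vpow v I := by
        simp only [Finset.sum_mul]
        rw [Finset.sum_comm]
        exact Finset.sum_congr rfl fun I _ => Finset.sum_congr rfl fun J _ => by ring
    _ = ∑ I : Idx k, (∑ J : Idx l, f I J * vpow u J) * vpow v I := by
        exact Finset.sum_congr rfl fun I _ => by rw [contract_symL]
    _ = ∑ I : Idx k, ∑ J : Idx l, f I J * vpow v I * vpow u J := by
        simp only [Finset.sum_mul]
        exact Finset.sum_congr rfl fun I _ => Finset.sum_congr rfl fun J _ => by ring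

lemma sum_cons {n : ℕ} (F : Idx (n + 1) → ℝ) :
    ∑ I : Idx (n + 1), F I = ∑ a : Fin 2, ∑ I : Idx n, F (Fin.cons a I) := by
  rw [← Equiv.sum_comp (Fin.consEquiv fun _ => Fin 2) F, Fintype.sum_prod_type]
  simp [Fin.consEquiv]

lemma vpow_cons {n : ℕ} (v : Fin 2 → ℝ) (a : Fin 2) (I : Idx n) :
    vpow v (Fin.cons a I) = v a * vpow v I := by
  simp [vpow, Fin.prod_univ_succ]

/-- for every `(k-1,ℓ-1)`-tensor `w`, every `v` and every `u ⟂ v`, the tensor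
`λw` contracts to zero against `v` in the first group and `u` in the second group; in
particular `Im λ` lies in the kernel of `f ↦ (v ↦ Σ f(I,J) v^I σ(v)^J)`. -/
theorem lam_in_kernel_of_contraction (k l : ℕ) (w : Tens k l) :
    (∀ v u : Fin 2 → ℝ, dot u v = 0 →
      ∑ I : Idx (k + 1), ∑ J : Idx (l + 1), lam w I J * vpow v I * vpow u J = 0) ∧
    (∀ v : Fin 2 → ℝ,
      ∑ I : Idx (k + 1), ∑ J : Idx (l + 1), lam w I J * vpow v I * vpow (rot v) J = 0) := by
  have main : ∀ v u : Fin 2 → ℝ, dot u v = 0 →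
      ∑ I : Idx (k + 1), ∑ J : Idx (l + 1), lam w I J * vpow v I * vpow u J = 0 := by
    intro v u huv
    simp only [dot] at huv
    simp only [lam]
    rw [contract_symKL]
    simp only [sum_cons, vpow_cons, Fin.cons_zero, Fin.tail_cons, Fin.sum_univ_two]
    norm_num
    rw [← Finset.sum_add_distrib]
    refine Finset.sum_eq_zero fun I' _ => ?_
    rw [← Finset.sum_add_distrib]
    refine Finset.sum_eq_zero fun J' _ => ?_
    linear_combination (w I' J' * vpow v I' * vpow u J') * huv
  refine ⟨main, fun v => main v (rot v) ?_⟩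
  simp [dot, rot]
  ring

end MRT
end

section
/- The composition Sym ∘ A annihilates the image of λ: for every (k-1,ℓ-1)-tensor w over ℝ², Sym(A(λw)) = 0, where Sym is full symmetrization over all k+ℓ indices. -/
open scoped BigOperators
open MeasureTheory

namespace MRT

/-! ### Auxiliary lemmas -/

lemma NJ_eq_sum {n : ℕ} (J : Idx n) : NJ J = ∑ j, if J j = 0 then 1 else 0 :=
  Finset.card_filter _ _

lemma NJ_comp {n : ℕ} (J : Idx n) (ρ : Equiv.Perm (Fin n)) : NJ (J ∘ ρ) = NJ J := by
  simp only [NJ_eq_sum, Function.comp]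
  exact Equiv.sum_comp ρ fun j => if J j = 0 then 1 else 0

lemma NJ_le {n : ℕ} (J : Idx n) : NJ J ≤ n :=
  (Finset.card_filter_le _ _).trans (by simp)

lemma NJ_succ {n : ℕ} (J : Idx (n+1)) :
    NJ J = (if J 0 = 0 then 1 else 0) + NJ (Fin.tail J) := by
  rw [NJ_eq_sum, NJ_eq_sum, Fin.sum_univ_succ]; rfl

lemma neg_one_pow_sub' (a b : ℕ) (h : b ≤ a) :
    ((-1:ℝ))^(a-b) = (-1)^a * (-1)^b := by
  have h2 : ((-1:ℝ))^(a-b) * ((-1:ℝ))^b = (-1)^a := by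
    rw [← pow_add, Nat.sub_add_cancel h]
  have h3 : ((-1:ℝ))^b * ((-1:ℝ))^b = 1 := by
    rw [← pow_add, Even.neg_one_pow ⟨b, rfl⟩]
  calc ((-1:ℝ))^(a-b) = ((-1:ℝ))^(a-b) * (((-1:ℝ))^b * ((-1:ℝ))^b) := by rw [h3, mul_one]
    _ = (-1)^a * (-1)^b := by rw [← mul_assoc, h2]

noncomputable def eperm {a b : ℕ} (π : Equiv.Perm (Fin a)) (ρ : Equiv.Perm (Fin b)) :
    Equiv.Perm (Fin (a+b)) := finSumFinEquiv.permCongr (Equiv.sumCongr π ρ)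

lemma eperm_castAdd {a b : ℕ} (π : Equiv.Perm (Fin a)) (ρ : Equiv.Perm (Fin b)) (i : Fin a) :
    eperm π ρ (Fin.castAdd b i) = Fin.castAdd b (π i) := by
  simp [eperm, Equiv.permCongr_apply]

lemma eperm_natAdd {a b : ℕ} (π : Equiv.Perm (Fin a)) (ρ : Equiv.Perm (Fin b)) (j : Fin b) :
    eperm π ρ (Fin.natAdd a j) = Fin.natAdd a (ρ j) := by
  simp [eperm, Equiv.permCongr_apply]

lemma toFull_comp_eperm {a b : ℕ} (f : Tens a b) (M : Idx (a+b))
    (π : Equiv.Perm (Fin a)) (ρ : Equiv.Perm (Fin b)) :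
    toFull f (M ∘ eperm π ρ)
      = f ((fun i => M (Fin.castAdd b i)) ∘ π) ((fun j => M (Fin.natAdd a j)) ∘ ρ) := by
  unfold toFull
  congr 1
  · funext i; simp [eperm_castAdd, Function.comp]
  · funext j; simp [eperm_natAdd, Function.comp]

lemma sum_symK {a b : ℕ} (f : Tens a b) (I : Idx (a + b)) :
    ∑ σ : Equiv.Perm (Fin (a + b)), toFull (symK f) (I ∘ σ)
      = ∑ σ : Equiv.Perm (Fin (a + b)), toFull f (I ∘ σ) := by
  have key : ∀ (σ : Equiv.Perm (Fin (a+b))) (π : Equiv.Perm (Fin a)),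
      f ((fun i => (I ∘ σ) (Fin.castAdd b i)) ∘ π) (fun j => (I ∘ σ) (Fin.natAdd a j))
        = toFull f (I ∘ ⇑(σ * eperm π (1 : Equiv.Perm (Fin b)))) := by
    intro σ π
    have hc : I ∘ ⇑(σ * eperm π (1 : Equiv.Perm (Fin b))) = (I ∘ σ) ∘ (eperm π (1 : Equiv.Perm (Fin b))) := by
      funext x; rfl
    rw [hc, toFull_comp_eperm]
    simp
  calc ∑ σ : Equiv.Perm (Fin (a+b)), toFull (symK f) (I ∘ σ)
      = ∑ σ : Equiv.Perm (Fin (a+b)), ((a.factorial : ℝ))⁻¹ *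
          ∑ π : Equiv.Perm (Fin a), toFull f (I ∘ ⇑(σ * eperm π (1 : Equiv.Perm (Fin b)))) := by
        refine Finset.sum_congr rfl fun σ _ => ?_
        show ((a.factorial : ℝ))⁻¹ * _ = _
        congr 1
        exact Finset.sum_congr rfl fun π _ => key σ π
    _ = ((a.factorial:ℝ))⁻¹ * ∑ π : Equiv.Perm (Fin a),
          ∑ σ : Equiv.Perm (Fin (a+b)), toFull f (I ∘ ⇑(σ * eperm π (1 : Equiv.Perm (Fin b)))) := by
        rw [← Finset.mul_sum, Finset.sum_comm]
    _ = ((a.factorial:ℝ))⁻¹ * ∑ π : Equiv.Perm (Fin a),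
          ∑ σ : Equiv.Perm (Fin (a+b)), toFull f (I ∘ σ) := by
        congr 1
        refine Finset.sum_congr rfl fun π _ => ?_
        simpa using Equiv.sum_comp (Equiv.mulRight (eperm π (1 : Equiv.Perm (Fin b)))) (fun σ => toFull f (I ∘ σ))
    _ = ∑ σ : Equiv.Perm (Fin (a+b)), toFull f (I ∘ σ) := by
        rw [Finset.sum_const, Finset.card_univ, Fintype.card_perm, Fintype.card_fin, nsmul_eq_mul,
          ← mul_assoc, inv_mul_cancel₀, one_mul]
        exact_mod_cast Nat.factorial_ne_zero a

lemma sum_symL {a b : ℕ} (f : Tens a b) (I : Idx (a + b)) :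
    ∑ σ : Equiv.Perm (Fin (a + b)), toFull (symL f) (I ∘ σ)
      = ∑ σ : Equiv.Perm (Fin (a + b)), toFull f (I ∘ σ) := by
  have key : ∀ (σ : Equiv.Perm (Fin (a+b))) (ρ : Equiv.Perm (Fin b)),
      f (fun i => (I ∘ σ) (Fin.castAdd b i)) ((fun j => (I ∘ σ) (Fin.natAdd a j)) ∘ ρ)
        = toFull f (I ∘ ⇑(σ * eperm (1 : Equiv.Perm (Fin a)) ρ)) := by
    intro σ ρ
    have hc : I ∘ ⇑(σ * eperm (1 : Equiv.Perm (Fin a)) ρ) = (I ∘ σ) ∘ (eperm (1 : Equiv.Perm (Fin a)) ρ) := by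
      funext x; rfl
    rw [hc, toFull_comp_eperm]
    simp
  calc ∑ σ : Equiv.Perm (Fin (a+b)), toFull (symL f) (I ∘ σ)
      = ∑ σ : Equiv.Perm (Fin (a+b)), ((b.factorial : ℝ))⁻¹ *
          ∑ ρ : Equiv.Perm (Fin b), toFull f (I ∘ ⇑(σ * eperm (1 : Equiv.Perm (Fin a)) ρ)) := by
        refine Finset.sum_congr rfl fun σ _ => ?_
        show ((b.factorial : ℝ))⁻¹ * _ = _
        congr 1
        exact Finset.sum_congr rfl fun ρ _ => key σ ρ
    _ = ((b.factorial:ℝ))⁻¹ * ∑ ρ : Equiv.Perm (Fin b),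
          ∑ σ : Equiv.Perm (Fin (a+b)), toFull f (I ∘ ⇑(σ * eperm (1 : Equiv.Perm (Fin a)) ρ)) := by
        rw [← Finset.mul_sum, Finset.sum_comm]
    _ = ((b.factorial:ℝ))⁻¹ * ∑ ρ : Equiv.Perm (Fin b),
          ∑ σ : Equiv.Perm (Fin (a+b)), toFull f (I ∘ σ) := by
        congr 1
        refine Finset.sum_congr rfl fun ρ _ => ?_
        simpa using Equiv.sum_comp (Equiv.mulRight (eperm (1 : Equiv.Perm (Fin a)) ρ)) (fun σ => toFull f (I ∘ σ))
    _ = ∑ σ : Equiv.Perm (Fin (a+b)), toFull f (I ∘ σ) := by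
        rw [Finset.sum_const, Finset.card_univ, Fintype.card_perm, Fintype.card_fin, nsmul_eq_mul,
          ← mul_assoc, inv_mul_cancel₀, one_mul]
        exact_mod_cast Nat.factorial_ne_zero b

lemma opA_symK {a b : ℕ} (f : Tens a b) : opA (symK f) = symK (opA f) := by
  funext I J
  simp only [opA, symK, Finset.mul_sum]
  exact Finset.sum_congr rfl fun π _ => by ring

lemma opA_symL {a b : ℕ} (f : Tens a b) : opA (symL f) = symL (opA f) := by
  funext I J
  simp only [opA, symL, NJ_comp]
  have hco : ∀ ρ : Equiv.Perm (Fin b), (dswap ∘ J) ∘ ⇑ρ = dswap ∘ (J ∘ ⇑ρ) := fun ρ => rfl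
  simp only [hco, Finset.mul_sum]
  exact Finset.sum_congr rfl fun ρ _ => by ring

/-- The elementary tensor `g ⊗ w` before symmetrization. -/
def Gd {k l : ℕ} (w : Tens k l) : Tens (k+1) (l+1) :=
  fun A B => (if A 0 = B 0 then (1:ℝ) else 0) * w (Fin.tail A) (Fin.tail B)

lemma lam_eq {k l : ℕ} (w : Tens k l) : lam w = symK (symL (Gd w)) := rfl

lemma dswap_symm : ∀ a b : Fin 2, a = dswap b → b = dswap a := by decide
lemma dswap_cases : ∀ a b : Fin 2, a = dswap b → (b = 0 ∧ ¬(a = 0)) ∨ (¬(b = 0) ∧ a = 0) := by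
  decide

lemma repr_toFull {k l : ℕ} (w : Tens k l) (N : Idx (k+1+(l+1))) :
    toFull (opA (Gd w)) N =
      (-1:ℝ)^(l+1 - NJ (fun j : Fin (l+1) => N (Fin.natAdd (k+1) j))) *
      ((if N (Fin.castAdd (l+1) 0) = dswap (N (Fin.natAdd (k+1) 0)) then (1:ℝ) else 0) *
        w (fun i : Fin k => N (Fin.castAdd (l+1) i.succ))
          (fun j : Fin l => dswap (N (Fin.natAdd (k+1) j.succ)))) := rfl

lemma core (l : ℕ) (a b : Fin 2) (T : ℕ) (hT : T ≤ l) (W : ℝ) :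
    (-1:ℝ)^(l+1 - ((if a = 0 then 1 else 0) + T)) * ((if b = dswap a then (1:ℝ) else 0) * W)
  = -((-1:ℝ)^(l+1 - ((if b = 0 then 1 else 0) + T)) * ((if a = dswap b then (1:ℝ) else 0) * W)) := by
  by_cases h : a = dswap b
  · have h' : b = dswap a := dswap_symm a b h
    rw [if_pos h', if_pos h]
    rcases dswap_cases a b h with ⟨h1, h2⟩ | ⟨h1, h2⟩
    · rw [if_neg h2, if_pos h1,
        neg_one_pow_sub' _ _ (by omega), neg_one_pow_sub' _ _ (by omega), pow_add, pow_add]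
      ring
    · rw [if_pos h2, if_neg h1,
        neg_one_pow_sub' _ _ (by omega), neg_one_pow_sub' _ _ (by omega), pow_add, pow_add]
      ring
  · have h' : ¬ b = dswap a := fun hb => h (dswap_symm b a hb)
    simp [h, h']

lemma toFull_swap_neg {k l : ℕ} (w : Tens k l) (M : Idx (k+1+(l+1))) :
    toFull (opA (Gd w)) (M ∘ ⇑(Equiv.swap (Fin.castAdd (l+1) (0 : Fin (k+1)))
        (Fin.natAdd (k+1) (0 : Fin (l+1)))))
      = - toFull (opA (Gd w)) M := by
  have sp : Equiv.swap (Fin.castAdd (l+1) (0 : Fin (k+1))) (Fin.natAdd (k+1) (0 : Fin (l+1)))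
      (Fin.castAdd (l+1) (0 : Fin (k+1))) = Fin.natAdd (k+1) (0 : Fin (l+1)) :=
    Equiv.swap_apply_left _ _
  have sq : Equiv.swap (Fin.castAdd (l+1) (0 : Fin (k+1))) (Fin.natAdd (k+1) (0 : Fin (l+1)))
      (Fin.natAdd (k+1) (0 : Fin (l+1))) = Fin.castAdd (l+1) (0 : Fin (k+1)) :=
    Equiv.swap_apply_right _ _
  have hIt : ∀ i : Fin k, Equiv.swap (Fin.castAdd (l+1) (0 : Fin (k+1)))
      (Fin.natAdd (k+1) (0 : Fin (l+1))) (Fin.castAdd (l+1) i.succ) = Fin.castAdd (l+1) i.succ := by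
    intro i
    apply Equiv.swap_apply_of_ne_of_ne
    · simp [Fin.ext_iff]
    · have := i.isLt
      simp [Fin.ext_iff]
      omega
  have hJt : ∀ j : Fin l, Equiv.swap (Fin.castAdd (l+1) (0 : Fin (k+1)))
      (Fin.natAdd (k+1) (0 : Fin (l+1))) (Fin.natAdd (k+1) j.succ) = Fin.natAdd (k+1) j.succ := by
    intro j
    apply Equiv.swap_apply_of_ne_of_ne
    · simp [Fin.ext_iff]
    · simp [Fin.ext_iff]
  rw [repr_toFull, repr_toFull]
  simp only [NJ_succ, Fin.tail_def, Function.comp_apply, sp, sq, hIt, hJt]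
  exact core l (M (Fin.castAdd (l+1) (0 : Fin (k+1)))) (M (Fin.natAdd (k+1) (0 : Fin (l+1))))
    (NJ fun j : Fin l => M (Fin.natAdd (k+1) j.succ)) (NJ_le _)
    (w (fun i : Fin k => M (Fin.castAdd (l+1) i.succ))
      (fun j : Fin l => dswap (M (Fin.natAdd (k+1) j.succ))))

lemma sum_opA_vanish {k l : ℕ} (w : Tens k l) (I : Idx (k + 1 + (l + 1))) :
    ∑ σ : Equiv.Perm (Fin (k + 1 + (l + 1))), toFull (opA (Gd w)) (I ∘ σ) = 0 := by
  have h1 : ∑ σ : Equiv.Perm (Fin (k+1+(l+1))), toFull (opA (Gd w)) (I ∘ σ)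
      = ∑ σ : Equiv.Perm (Fin (k+1+(l+1))), toFull (opA (Gd w))
          (I ∘ ⇑(σ * Equiv.swap (Fin.castAdd (l+1) (0 : Fin (k+1)))
            (Fin.natAdd (k+1) (0 : Fin (l+1))))) := by
    simpa using (Equiv.sum_comp (Equiv.mulRight (Equiv.swap (Fin.castAdd (l+1) (0 : Fin (k+1))) (Fin.natAdd (k+1) (0 : Fin (l+1))))) (fun σ => toFull (opA (Gd w)) (I ∘ σ))).symm
  have h2 : ∀ σ : Equiv.Perm (Fin (k+1+(l+1))),
      toFull (opA (Gd w)) (I ∘ ⇑(σ * Equiv.swap (Fin.castAdd (l+1) (0 : Fin (k+1)))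
          (Fin.natAdd (k+1) (0 : Fin (l+1)))))
        = - toFull (opA (Gd w)) (I ∘ σ) := by
    intro σ
    have hc : I ∘ ⇑(σ * Equiv.swap (Fin.castAdd (l+1) (0 : Fin (k+1)))
        (Fin.natAdd (k+1) (0 : Fin (l+1))))
      = (I ∘ ⇑σ) ∘ ⇑(Equiv.swap (Fin.castAdd (l+1) (0 : Fin (k+1)))
          (Fin.natAdd (k+1) (0 : Fin (l+1)))) := rfl
    rw [hc]
    exact toFull_swap_neg w (I ∘ ⇑σ)
  have h3 : ∑ σ : Equiv.Perm (Fin (k+1+(l+1))), toFull (opA (Gd w)) (I ∘ σ)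
      = - ∑ σ : Equiv.Perm (Fin (k+1+(l+1))), toFull (opA (Gd w)) (I ∘ σ) := by
    conv_lhs => rw [h1]
    rw [← Finset.sum_neg_distrib]
    exact Finset.sum_congr rfl fun σ _ => h2 σ
  linarith


/-- `Sym ∘ A` annihilates the image of `λ`: `Sym(A(λw)) = 0` for every
`(k-1,ℓ-1)`-tensor `w`, with `Sym` the full symmetrization over all `k+ℓ` indices. -/
theorem symA_annihilates_lam (k l : ℕ) (w : Tens k l) :
    ∀ I : Idx (k + 1 + (l + 1)), Sym (toFull (opA (lam w))) I = 0 := by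
  intro I
  have h1 : opA (lam w) = symK (symL (opA (Gd w))) := by
    rw [lam_eq, opA_symK, opA_symL]
  simp only [Sym]
  rw [h1, sum_symK, sum_symL, sum_opA_vanish, mul_zero]

end MRT
end
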